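/- arXiv:math/0509527 — 5 statements merged into one kernel-verified Lean document; each statement's English description precedes it below -/
import Mathlib

section
/- Let G be a locally compact, compactly generated group and π a continuous unitary representation of G. In Z¹(G,π), endowed with the topology of uniform convergence on compact subsets: (1) the set sublin(G,π) of 1-cocycles with sublinear growth is a closed linear subspace; (2) the set lin(G,π) of 1-cocycles with linear growth is an open subset. -/
open MeasureTheory Filter Topology
open scoped BigOperators

noncomputable section

/-- Word length with respect to a generating set `S`. -/
def wordLength {G : Type*} [Group G] (S : Set G) (g : G) : ℕ :=
  sInf {n : ℕ | ∃ l : List G, l.length = n ∧ (∀ x ∈ l, x ∈ S) ∧ l.prod = g}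

/-- `f₁ ≼ f₂` : there are `M > 0` and a compact set `K` with `f₁ ≤ M f₂` outside `K`. -/
def Preceq {G : Type*} [TopologicalSpace G] (f₁ f₂ : G → ℝ) : Prop :=
  ∃ M > (0:ℝ), ∃ K : Set G, IsCompact K ∧ ∀ g ∉ K, f₁ g ≤ M * f₂ g

/-- `f₁ ≺ f₂` : for every `ε > 0` there is a compact set `K` with `f₁ ≤ ε f₂` outside `K`. -/
def Prec {G : Type*} [TopologicalSpace G] (f₁ f₂ : G → ℝ) : Prop :=
  ∀ ε > (0:ℝ), ∃ K : Set G, IsCompact K ∧ ∀ g ∉ K, f₁ g ≤ ε * f₂ g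

variable {G H : Type*} [Group G] [TopologicalSpace G] [NormedAddCommGroup H]
  [InnerProductSpace ℂ H]

/-- A 1-cocycle of `G` with values in the representation `ρ` has sublinear growth. -/
def SublinGrowth (S : Set G) (f : G → H) : Prop :=
  Prec (fun g => ‖f g‖) (fun g => (wordLength S g : ℝ))

/-- A 1-cocycle of `G` with values in the representation `ρ` has linear growth. -/
def LinGrowth (S : Set G) (f : G → H) : Prop :=
  Preceq (fun g => (wordLength S g : ℝ)) (fun g => ‖f g‖)

/-- The space `Z¹(G,π)` of continuous 1-cocycles, as a subtype of `C(G,H)`; its topology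
(induced by the compact-open topology on `C(G,H)`) is the topology of uniform convergence
on compact subsets. -/
def Z1 (ρ : G →* (H ≃ₗᵢ[ℂ] H)) : Type _ :=
  {f : C(G, H) // ∀ g h : G, f (g * h) = ρ g (f h) + f g}

instance (ρ : G →* (H ≃ₗᵢ[ℂ] H)) : TopologicalSpace (Z1 ρ) :=
  instTopologicalSpaceSubtype

/-!
A cocycle `b` satisfies `‖b g‖ ≤ |g|_S · sup_{s ∈ S} ‖b s‖`, since along a word
`g = s₁ ⋯ sₙ` the cocycle identity writes `b g` as a sum of `n` vectors `π(s₁ ⋯ sᵢ₋₁) b(sᵢ)`.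
Applied to a difference `b - b'`, this turns uniform closeness on the compact set `closure S`
into `‖b g - b' g‖ ≤ δ |g|_S` for all `g`. Sublinear growth survives such perturbations with `δ`
arbitrarily small (closedness), and linear growth with constant `M` survives those with
`δ < 1/M` (openness).
-/

section WordLength

variable {G : Type*} [Group G] {S : Set G}

theorem exists_list_length_eq_wordLength (hSsymm : S⁻¹ = S) (hSgen : Subgroup.closure S = ⊤)
    (g : G) : ∃ l : List G, l.length = wordLength S g ∧ (∀ x ∈ l, x ∈ S) ∧ l.prod = g := by
  have hg : g ∈ Submonoid.closure S := by
    have h : g ∈ (Subgroup.closure S).toSubmonoid := by simp [hSgen]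
    rwa [Subgroup.closure_toSubmonoid, hSsymm, Set.union_self] at h
  obtain ⟨l, hlS, hlg⟩ := Submonoid.exists_list_of_mem_closure hg
  show wordLength S g ∈ {n | ∃ l : List G, l.length = n ∧ (∀ x ∈ l, x ∈ S) ∧ l.prod = g}
  exact Nat.sInf_mem ⟨l.length, l, rfl, hlS, hlg⟩

end WordLength

section Cocycle

variable {G R E : Type*} [Group G] [Semiring R] [SeminormedAddCommGroup E] [Module R E]

def IsOneCocycle (ρ : G →* (E ≃ₗᵢ[R] E)) (c : G → E) : Prop :=
  ∀ g h : G, c (g * h) = ρ g (c h) + c g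

namespace IsOneCocycle

variable {ρ : G →* (E ≃ₗᵢ[R] E)} {c c' : G → E}

theorem map_one (hc : IsOneCocycle ρ c) : c 1 = 0 := by
  have h := hc 1 1
  rw [mul_one, _root_.map_one, LinearIsometryEquiv.coe_one, id_eq] at h
  exact right_eq_add.mp h

theorem sub (hc : IsOneCocycle ρ c) (hc' : IsOneCocycle ρ c') : IsOneCocycle ρ (c - c') := by
  intro g h
  simp only [Pi.sub_apply, hc g h, hc' g h, map_sub]
  abel

theorem norm_list_prod_le (hc : IsOneCocycle ρ c) {S : Set G} {C : ℝ}
    (hC : ∀ s ∈ S, ‖c s‖ ≤ C) (l : List G) (hl : ∀ x ∈ l, x ∈ S) :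
    ‖c l.prod‖ ≤ l.length * C := by
  induction l with
  | nil => simp [hc.map_one]
  | cons s t ih =>
    rw [List.prod_cons, hc, List.length_cons, Nat.cast_succ, add_one_mul]
    calc ‖ρ s (c t.prod) + c s‖ ≤ ‖c t.prod‖ + ‖c s‖ := by
          simpa only [LinearIsometryEquiv.norm_map] using norm_add_le (ρ s (c t.prod)) (c s)
      _ ≤ t.length * C + C :=
          add_le_add (ih fun x hx => hl x (List.mem_cons_of_mem s hx)) (hC s (hl s (by simp)))

theorem norm_le_wordLength_mul (hc : IsOneCocycle ρ c) {S : Set G}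
    (hSsymm : S⁻¹ = S) (hSgen : Subgroup.closure S = ⊤) {C : ℝ} (hC : ∀ s ∈ S, ‖c s‖ ≤ C)
    (g : G) : ‖c g‖ ≤ wordLength S g * C := by
  obtain ⟨l, hlen, hlS, rfl⟩ := exists_list_length_eq_wordLength hSsymm hSgen g
  simpa only [hlen] using hc.norm_list_prod_le hC l hlS

end IsOneCocycle

end Cocycle

section Growth

variable {G E : Type*} [Group G] [TopologicalSpace G] [NormedAddCommGroup E] {S : Set G}

theorem sublinGrowth_zero : SublinGrowth S (0 : G → E) := fun ε hε =>
  ⟨∅, isCompact_empty, fun g _ => by simp only [Pi.zero_apply, norm_zero]; positivity⟩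

theorem SublinGrowth.add {f₁ f₂ : G → E} (h₁ : SublinGrowth S f₁) (h₂ : SublinGrowth S f₂) :
    SublinGrowth S (f₁ + f₂) := by
  intro ε hε
  obtain ⟨K₁, hK₁, hf₁⟩ := h₁ (ε / 2) (half_pos hε)
  obtain ⟨K₂, hK₂, hf₂⟩ := h₂ (ε / 2) (half_pos hε)
  refine ⟨K₁ ∪ K₂, hK₁.union hK₂, fun g hg => ?_⟩
  rw [Set.mem_union, not_or] at hg
  calc ‖f₁ g + f₂ g‖ ≤ ‖f₁ g‖ + ‖f₂ g‖ := norm_add_le _ _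
    _ ≤ ε / 2 * wordLength S g + ε / 2 * wordLength S g := add_le_add (hf₁ g hg.1) (hf₂ g hg.2)
    _ = ε * wordLength S g := by ring

theorem SublinGrowth.const_smul {𝕜 : Type*} [NormedField 𝕜] [NormedSpace 𝕜 E] {f : G → E}
    (hf : SublinGrowth S f) (c : 𝕜) :
    SublinGrowth S (c • f) := by
  intro ε hε
  obtain ⟨K, hK, hfK⟩ := hf (ε / (‖c‖ + 1)) (by positivity)
  refine ⟨K, hK, fun g hg => ?_⟩
  calc ‖(c • f) g‖ = ‖c‖ * ‖f g‖ := norm_smul c (f g)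
    _ ≤ (‖c‖ + 1) * (ε / (‖c‖ + 1) * wordLength S g) :=
        mul_le_mul (by linarith) (hfK g hg) (norm_nonneg _) (by positivity)
    _ = ε * wordLength S g := by field_simp

theorem sublinGrowth_of_forall_norm_sub_le {f : G → E}
    (h : ∀ ε > (0 : ℝ), ∃ f', SublinGrowth S f' ∧ ∀ g, ‖f g - f' g‖ ≤ ε * wordLength S g) :
    SublinGrowth S f := by
  intro ε hε
  obtain ⟨f', hf', hff'⟩ := h (ε / 2) (half_pos hε)
  obtain ⟨K, hK, hf'K⟩ := hf' (ε / 2) (half_pos hε)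
  refine ⟨K, hK, fun g hg => ?_⟩
  calc ‖f g‖ ≤ ‖f g - f' g‖ + ‖f' g‖ := norm_le_norm_sub_add _ _
    _ ≤ ε / 2 * wordLength S g + ε / 2 * wordLength S g := add_le_add (hff' g) (hf'K g hg)
    _ = ε * wordLength S g := by ring

-- With `δ = 1 / (2M)`, a perturbation costs at most half of the lower bound `‖f g‖ ≥ |g|_S / M`.
theorem LinGrowth.exists_forall_norm_sub_le {f : G → E} (hf : LinGrowth S f) :
    ∃ δ > (0 : ℝ), ∀ f' : G → E, (∀ g, ‖f g - f' g‖ ≤ δ * wordLength S g) → LinGrowth S f' := by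
  obtain ⟨M, hM, K, hK, hfK⟩ := hf
  refine ⟨1 / (2 * M), by positivity, fun f' hff' => ⟨2 * M, by positivity, K, hK, fun g hg => ?_⟩⟩
  have hdiff : 2 * M * ‖f g - f' g‖ ≤ wordLength S g := by
    calc 2 * M * ‖f g - f' g‖ ≤ 2 * M * (1 / (2 * M) * wordLength S g) := by gcongr; exact hff' g
      _ = wordLength S g := by field_simp
  nlinarith [hfK g hg, norm_sub_norm_le (f g) (f' g)]

end Growth

theorem ContinuousMap.eventually_forall_dist_lt {X Y : Type*} [TopologicalSpace X]
    [PseudoMetricSpace Y] (f₀ : C(X, Y)) {K : Set X} (hK : IsCompact K) {δ : ℝ} (hδ : 0 < δ) :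
    ∀ᶠ f in 𝓝 f₀, ∀ x ∈ K, dist (f₀ x) (f x) < δ :=
  (nhds_basis_uniformity' ContinuousMap.hasBasis_compactConvergenceUniformity).mem_of_mem
    (i := (K, {p : Y × Y | dist p.1 p.2 < δ})) ⟨hK, Metric.dist_mem_uniformity hδ⟩

theorem Z1.eventually_norm_sub_le_mul_wordLength {S : Set G} (hScpt : IsCompact (closure S))
    (hSsymm : S⁻¹ = S) (hSgen : Subgroup.closure S = ⊤) {ρ : G →* (H ≃ₗᵢ[ℂ] H)} (b : Z1 ρ)
    {δ : ℝ} (hδ : 0 < δ) : ∀ᶠ b' in 𝓝 b, ∀ g, ‖b.1 g - b'.1 g‖ ≤ δ * wordLength S g := by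
  filter_upwards [continuous_subtype_val.continuousAt.eventually
    (b.1.eventually_forall_dist_lt hScpt hδ)] with b' hb' g
  have hclose : ∀ s ∈ S, ‖(⇑b.1 - ⇑b'.1) s‖ ≤ δ := fun s hs =>
    (dist_eq_norm (b.1 s) (b'.1 s) ▸ hb' s (subset_closure hs)).le
  simpa only [Pi.sub_apply, mul_comm δ] using
    (IsOneCocycle.sub b.2 b'.2).norm_le_wordLength_mul hSsymm hSgen hclose g

theorem sublin_closed_subspace_lin_open_general
    (S : Set G) (hScpt : IsCompact (closure S)) (hSsymm : S⁻¹ = S)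
    (hSgen : Subgroup.closure S = ⊤)
    (ρ : G →* (H ≃ₗᵢ[ℂ] H)) :
    -- (1) sublin(G,π) is closed in Z¹(G,π) …
    IsClosed {b : Z1 ρ | SublinGrowth S (b.1 : G → H)} ∧
    -- … and is a linear subspace:
    (∀ b₁ b₂ : Z1 ρ, SublinGrowth S (b₁.1 : G → H) → SublinGrowth S (b₂.1 : G → H) →
      SublinGrowth S ((b₁.1 + b₂.1 : C(G, H)) : G → H)) ∧
    (∀ (c : ℂ) (b : Z1 ρ), SublinGrowth S (b.1 : G → H) →
      SublinGrowth S ((c • b.1 : C(G, H)) : G → H)) ∧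
    SublinGrowth S ((0 : C(G, H)) : G → H) ∧
    -- (2) lin(G,π) is open in Z¹(G,π).
    IsOpen {b : Z1 ρ | LinGrowth S (b.1 : G → H)} := by
  have hnear := fun (b : Z1 ρ) {δ : ℝ} (hδ : 0 < δ) =>
    b.eventually_norm_sub_le_mul_wordLength hScpt hSsymm hSgen hδ
  refine ⟨isClosed_of_closure_subset fun b hb => ?_, fun _ _ h₁ h₂ => h₁.add h₂,
    fun c _ h => h.const_smul c, sublinGrowth_zero, isOpen_iff_mem_nhds.mpr fun b hb => ?_⟩
  · refine sublinGrowth_of_forall_norm_sub_le fun ε hε => ?_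
    obtain ⟨b', hb'b, hb'⟩ := ((hnear b hε).and_frequently (mem_closure_iff_frequently.mp hb)).exists
    exact ⟨b'.1, hb', hb'b⟩
  · obtain ⟨δ, hδ, hpert⟩ := LinGrowth.exists_forall_norm_sub_le hb
    exact (hnear b hδ).mono fun b' hb' => hpert b'.1 hb'

/-- In `Z¹(G,π)` with the topology of uniform convergence on compact subsets, the set of
sublinear-growth cocycles is a closed linear subspace, and the set of linear-growth cocycles
is open. -/
theorem sublin_closed_subspace_lin_open
    [IsTopologicalGroup G] [LocallyCompactSpace G]
    (S : Set G) (hSopen : IsOpen S) (hScpt : IsCompact (closure S)) (hSsymm : S⁻¹ = S)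
    (hSgen : Subgroup.closure S = ⊤)
    (ρ : G →* (H ≃ₗᵢ[ℂ] H)) (hρ : ∀ v : H, Continuous fun g => ρ g v) :
    -- (1) sublin(G,π) is closed in Z¹(G,π) …
    IsClosed {b : Z1 ρ | SublinGrowth S (b.1 : G → H)} ∧
    -- … and is a linear subspace:
    (∀ b₁ b₂ : Z1 ρ, SublinGrowth S (b₁.1 : G → H) → SublinGrowth S (b₂.1 : G → H) →
      SublinGrowth S ((b₁.1 + b₂.1 : C(G, H)) : G → H)) ∧
    (∀ (c : ℂ) (b : Z1 ρ), SublinGrowth S (b.1 : G → H) →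
      SublinGrowth S ((c • b.1 : C(G, H)) : G → H)) ∧
    SublinGrowth S ((0 : C(G, H)) : G → H) ∧
    -- (2) lin(G,π) is open in Z¹(G,π).
    IsOpen {b : Z1 ρ | LinGrowth S (b.1 : G → H)} :=
  sublin_closed_subspace_lin_open_general S hScpt hSsymm hSgen ρ
end
end

section
/- Let G be a locally compact, compactly generated amenable group admitting a controlled Følner sequence (Fₙ) with respect to a compact generating set S. Let π be a continuous unitary representation of G, b ∈ Z¹(G,π), α the associated affine action, and vₙ = (1/μ(Fₙ)) ∫_{Fₙ} b(g) dμ(g). Then the following are equivalent: (1) b is an almost coboundary; (2) b has sublinear growth, ‖b(g)‖ ≺ |g|_S; (3) (vₙ) is a sequence of almost fixed points for α, i.e. sup_{s∈S} ‖α(s)vₙ − vₙ‖ → 0. -/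
open MeasureTheory Filter Topology
open scoped BigOperators symmDiff

noncomputable section

/-- `ε_F = sup_{s ∈ S} μ(sF Δ F)/μ(F)`. -/
def folnerConstant {G : Type*} [Group G] [MeasurableSpace G] (μ : Measure G)
    (S F : Set G) : ℝ :=
  sSup ((fun s => (μ (((fun x => s * x) '' F) ∆ F)).toReal / (μ F).toReal) '' S)

/-- `v_F = (1/μ(F)) ∫_F b dμ`. -/
def folnerAverage {G : Type*} [Group G] [MeasurableSpace G]
    {H : Type*} [NormedAddCommGroup H] [InnerProductSpace ℂ H] [CompleteSpace H]
    (μ : Measure G) (b : G → H) (F : Set G) : H :=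
  (μ F).toReal⁻¹ • ∫ g in F, b g ∂μ

/-- The set of coboundaries `g ↦ v - π(g)v`, viewed inside `C(G,H)` (whose compact-open
topology is the topology of uniform convergence on compact subsets). -/
def coboundaries {G H : Type*} [Group G] [TopologicalSpace G] [NormedAddCommGroup H]
    [InnerProductSpace ℂ H] (ρ : G →* (H ≃ₗᵢ[ℂ] H)) : Set C(G, H) :=
  {f | ∃ v : H, ∀ g : G, f g = v - ρ g v}

/-!
(1) ⇒ (2): if `b` is uniformly `ε`-close on `S` to a coboundary `g ↦ v - ρ g v`, their
difference is a cocycle of size at most `ε` on `S`, hence of size at most `ε |g|_S` everywhere,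
while the coboundary is bounded by `2‖v‖`.

(2) ⇒ (3): the cocycle identity gives `α(s)v_F - v_F = μ(F)⁻¹ (∫_{sF} b - ∫_F b)`, which is at
most `ε_F` times the size of `b` on `sF ∆ F`. On a controlled Følner set `|g|_S ≤ c/ε_F`, so
sublinear growth makes this `o(1)`.

(3) ⇒ (1): `b - (v_n - ρ(·)v_n)` is the cocycle `g ↦ α(g)v_n - v_n`, small on `S`. By Baire, the
closed sets of points where every continuous cocycle that is `δ`-small on `S` is `mδ`-small
exhaust `G`, so one of them has interior and finitely many translates of it cover any compact
set: the cocycle is then uniformly small on compact sets.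
-/

section Cocycle

variable {G H : Type*} [Group G] [NormedAddCommGroup H] [InnerProductSpace ℂ H]

def IsCocycle (ρ : G →* (H ≃ₗᵢ[ℂ] H)) (c : G → H) : Prop :=
  ∀ g h, c (g * h) = ρ g (c h) + c g

def IsAlmostFixedSeq (ρ : G →* (H ≃ₗᵢ[ℂ] H)) (b : G → H) (S : Set G) (v : ℕ → H) : Prop :=
  ∀ δ > (0:ℝ), ∃ N : ℕ, ∀ n ≥ N, ∀ s ∈ S, ‖(ρ s (v n) + b s) - v n‖ ≤ δ

namespace IsCocycle

variable {ρ : G →* (H ≃ₗᵢ[ℂ] H)} {c : G → H}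

theorem map_one (hc : IsCocycle ρ c) : c 1 = 0 := by
  simpa using hc 1 1

theorem sub_coboundary (hc : IsCocycle ρ c) (v : H) :
    IsCocycle ρ fun g => c g - (v - ρ g v) := by
  intro g h
  simp only [hc g h, map_mul, LinearIsometryEquiv.coe_mul, Function.comp_apply, map_sub]
  abel

theorem norm_mul_le (hc : IsCocycle ρ c) (g k : G) : ‖c (g * k)‖ ≤ ‖c k‖ + ‖c g‖ := by
  rw [hc, ← (ρ g).norm_map (c k)]
  exact norm_add_le _ _

theorem norm_le_norm_mul_add (hc : IsCocycle ρ c) (g k : G) : ‖c k‖ ≤ ‖c (g * k)‖ + ‖c g‖ :=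
  calc ‖c k‖ = ‖c (g * k) - c g‖ := by
        rw [hc, add_sub_cancel_right, LinearIsometryEquiv.norm_map]
    _ ≤ ‖c (g * k)‖ + ‖c g‖ := norm_sub_le _ _

theorem norm_list_prod_le (hc : IsCocycle ρ c) {S : Set G} {δ : ℝ} (hδ : ∀ s ∈ S, ‖c s‖ ≤ δ)
    {l : List G} (hl : ∀ x ∈ l, x ∈ S) : ‖c l.prod‖ ≤ l.length * δ := by
  induction l with
  | nil => simp [hc.map_one]
  | cons a t ih =>
    rw [List.forall_mem_cons] at hl
    calc ‖c (a :: t).prod‖ ≤ ‖c t.prod‖ + ‖c a‖ := hc.norm_mul_le a t.prod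
      _ ≤ t.length * δ + δ := add_le_add (ih hl.2) (hδ a hl.1)
      _ = (a :: t).length * δ := by rw [List.length_cons]; push_cast; ring

end IsCocycle

end Cocycle

section WordLength

variable {G : Type*} [Group G] {S : Set G}

theorem exists_list_prod_eq_length_eq_wordLength (hSsymm : S⁻¹ = S)
    (hSgen : Subgroup.closure S = ⊤) (g : G) :
    ∃ l : List G, (∀ x ∈ l, x ∈ S) ∧ l.prod = g ∧ l.length = wordLength S g := by
  have hg : g ∈ Submonoid.closure S := by
    have hg : g ∈ (Subgroup.closure S).toSubmonoid := by simp [hSgen]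
    rwa [Subgroup.closure_toSubmonoid, hSsymm, Set.union_self] at hg
  obtain ⟨l, hl, rfl⟩ := Submonoid.exists_list_of_mem_closure hg
  obtain ⟨l', hlen, hmem, hprod⟩ := Nat.sInf_mem (s := {n | ∃ l' : List G, l'.length = n ∧
    (∀ x ∈ l', x ∈ S) ∧ l'.prod = l.prod}) ⟨l.length, l, rfl, hl, rfl⟩
  exact ⟨l', hmem, hprod, hlen⟩

theorem IsCocycle.norm_le_wordLength_mul {H : Type*} [NormedAddCommGroup H] [InnerProductSpace ℂ H]
    {ρ : G →* (H ≃ₗᵢ[ℂ] H)} {c : G → H} (hc : IsCocycle ρ c) (hSsymm : S⁻¹ = S)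
    (hSgen : Subgroup.closure S = ⊤) {δ : ℝ} (hδ : ∀ s ∈ S, ‖c s‖ ≤ δ) (g : G) :
    ‖c g‖ ≤ wordLength S g * δ := by
  obtain ⟨l, hl, rfl, hlen⟩ := exists_list_prod_eq_length_eq_wordLength hSsymm hSgen g
  simpa [← hlen] using hc.norm_list_prod_le hδ hl

theorem exists_isCompact_forall_wordLength_le [TopologicalSpace G] [IsTopologicalGroup G]
    (hS : IsCompact S) (hSsymm : S⁻¹ = S) (hSgen : Subgroup.closure S = ⊤) (r : ℕ) :
    ∃ K, IsCompact K ∧ ∀ g, wordLength S g ≤ r → g ∈ K := by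
  suffices ∃ K, IsCompact K ∧ ∀ l : List G, (∀ x ∈ l, x ∈ S) → l.length ≤ r → l.prod ∈ K by
    obtain ⟨K, hK, hmem⟩ := this
    refine ⟨K, hK, fun g hg => ?_⟩
    obtain ⟨l, hl, rfl, hlen⟩ := exists_list_prod_eq_length_eq_wordLength hSsymm hSgen g
    exact hmem l hl (hlen ▸ hg)
  induction r with
  | zero =>
    exact ⟨{1}, isCompact_singleton, fun l _ hl => by
      simp [List.length_eq_zero_iff.mp (Nat.le_zero.mp hl)]⟩
  | succ r ih =>
    obtain ⟨K, hK, hmem⟩ := ih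
    open scoped Pointwise in
    refine ⟨K ∪ S * K, hK.union (hS.mul hK), fun l hl hlen => ?_⟩
    cases l with
    | nil => exact Or.inl (hmem [] hl (Nat.zero_le _))
    | cons a t =>
      rw [List.forall_mem_cons] at hl
      exact Or.inr (Set.mul_mem_mul hl.1 (hmem t hl.2 (Nat.succ_le_succ_iff.mp hlen)))

end WordLength

theorem ContinuousMap.mem_closure_iff_forall_isCompact_dist_lt {X Y : Type*} [TopologicalSpace X]
    [PseudoMetricSpace Y] {A : Set C(X, Y)} {f : C(X, Y)} :
    f ∈ closure A ↔ ∀ K, IsCompact K → ∀ ε > 0, ∃ g ∈ A, ∀ x ∈ K, dist (f x) (g x) < ε := by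
  rw [mem_closure_iff_nhds_basis
    (nhds_basis_uniformity' Metric.uniformity_basis_dist.compactConvergenceUniformity)]
  simp only [UniformSpace.ball, Set.mem_preimage, Set.mem_ofPred_eq, Prod.forall, and_imp,
    gt_iff_lt]
  exact ⟨fun h K hK ε hε => h K ε hK hε, fun h K ε hK hε => h K hK ε hε⟩

theorem prec_wordLength_iff {G : Type*} [Group G] [TopologicalSpace G] [IsTopologicalGroup G]
    {S : Set G} (hS : IsCompact S) (hSsymm : S⁻¹ = S) (hSgen : Subgroup.closure S = ⊤)
    {f : G → ℝ} (hf : Continuous f) :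
    Prec f (fun g => (wordLength S g : ℝ)) ↔ ∀ ε > 0, ∃ C, ∀ g, f g ≤ ε * wordLength S g + C := by
  constructor
  · intro hprec ε hε
    obtain ⟨K, hK, hfK⟩ := hprec ε hε
    obtain ⟨C, hC⟩ := hK.exists_bound_of_continuousOn hf.continuousOn
    refine ⟨max C 0, fun g => ?_⟩
    have hlen : 0 ≤ ε * wordLength S g := by positivity
    by_cases hg : g ∈ K
    · linarith [(le_abs_self _).trans (hC g hg), le_max_left C 0]
    · linarith [hfK g hg, le_max_right C 0]
  · intro hlin ε hε
    obtain ⟨C, hC⟩ := hlin (ε / 2) (half_pos hε)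
    obtain ⟨K, hK, hball⟩ :=
      exists_isCompact_forall_wordLength_le hS hSsymm hSgen ⌈C / (ε / 2)⌉₊
    refine ⟨K, hK, fun g hg => ?_⟩
    have hlong : C / (ε / 2) ≤ wordLength S g :=
      (Nat.le_ceil _).trans (by exact_mod_cast (not_le.mp (mt (hball g) hg)).le)
    rw [div_le_iff₀ (half_pos hε)] at hlong
    linarith [hC g]

theorem IsCompact.exists_forall_cocycle_norm_le {G H : Type*} [Group G] [TopologicalSpace G]
    [IsTopologicalGroup G] [LocallyCompactSpace G] [NormedAddCommGroup H] [InnerProductSpace ℂ H]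
    {ρ : G →* (H ≃ₗᵢ[ℂ] H)} {S : Set G} (hSsymm : S⁻¹ = S) (hSgen : Subgroup.closure S = ⊤)
    {K : Set G} (hK : IsCompact K) :
    ∃ C ≥ (0 : ℝ), ∀ c : G → H, IsCocycle ρ c → Continuous c → ∀ δ ≥ 0, (∀ s ∈ S, ‖c s‖ ≤ δ) →
      ∀ k ∈ K, ‖c k‖ ≤ C * δ := by
  let ball (m : ℕ) : Set G := {g | ∀ c : G → H, IsCocycle ρ c → Continuous c → ∀ δ : ℝ,
    (∀ s ∈ S, ‖c s‖ ≤ δ) → ‖c g‖ ≤ m * δ}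
  have hclosed (m : ℕ) : IsClosed (ball m) := by
    simp only [ball, Set.ofPred_forall]
    exact isClosed_iInter fun c => isClosed_iInter fun _ => isClosed_iInter fun hcont =>
      isClosed_iInter fun δ => isClosed_iInter fun _ => isClosed_le hcont.norm continuous_const
  have hcover : ⋃ m, ball m = Set.univ := Set.eq_univ_of_forall fun g => Set.mem_iUnion.2
    ⟨wordLength S g, fun c hc _ δ hδ => hc.norm_le_wordLength_mul hSsymm hSgen hδ g⟩
  obtain ⟨m, hm⟩ := nonempty_interior_of_iUnion_of_closed hclosed hcover
  obtain ⟨t, ht⟩ := compact_covered_by_mul_left_translates hK hm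
  refine ⟨m + t.sup (wordLength S), by positivity, fun c hc hcont δ hδ0 hδ k hk => ?_⟩
  obtain ⟨g, hgt, hgk⟩ := Set.mem_iUnion₂.mp (ht hk)
  have hg : (wordLength S g : ℝ) ≤ t.sup (wordLength S) := by exact_mod_cast Finset.le_sup hgt
  calc ‖c k‖ ≤ ‖c (g * k)‖ + ‖c g‖ := hc.norm_le_norm_mul_add g k
    _ ≤ m * δ + wordLength S g * δ :=
      add_le_add (hgk c hc hcont δ hδ) (hc.norm_le_wordLength_mul hSsymm hSgen hδ g)
    _ ≤ (m + t.sup (wordLength S)) * δ := by nlinarith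

theorem Continuous.integrableOn_of_isCompact_closure {X E : Type*} [TopologicalSpace X]
    [MeasurableSpace X] [OpensMeasurableSpace X] [NormedAddCommGroup E] {μ : Measure X}
    [IsFiniteMeasureOnCompacts μ] {f : X → E} (hf : Continuous f) {s : Set X}
    (hs : MeasurableSet s) (hsc : IsCompact (closure s)) : IntegrableOn f s μ :=
  hf.continuousOn.integrableOn_of_subset_isCompact hsc hs subset_closure
    (measure_ne_top_of_subset subset_closure hsc.measure_ne_top)

theorem norm_setIntegral_sub_setIntegral_le {X E : Type*} [MeasurableSpace X]
    [NormedAddCommGroup E] [NormedSpace ℝ E] {μ : Measure X} {f : X → E} {A F : Set X}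
    (hA : MeasurableSet A) (hF : MeasurableSet F) (hfA : IntegrableOn f A μ)
    (hfF : IntegrableOn f F μ) (hAF : μ (A ∆ F) ≠ ⊤) {B : ℝ}
    (hB : ∀ᵐ x ∂μ.restrict (A ∆ F), ‖f x‖ ≤ B) :
    ‖∫ x in A, f x ∂μ - ∫ x in F, f x ∂μ‖ ≤ B * μ.real (A ∆ F) := by
  have hAF' : μ (A \ F) ≠ ⊤ := measure_ne_top_of_subset Set.subset_union_left hAF
  have hFA' : μ (F \ A) ≠ ⊤ := measure_ne_top_of_subset Set.subset_union_right hAF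
  have hsplit : ∫ x in A, f x ∂μ - ∫ x in F, f x ∂μ
      = ∫ x in A \ F, f x ∂μ - ∫ x in F \ A, f x ∂μ := by
    rw [← integral_inter_add_sdiff hF hfA, ← integral_inter_add_sdiff hA hfF, Set.inter_comm]
    abel
  rw [hsplit, Set.symmDiff_def, measureReal_union disjoint_sdiff_sdiff (hF.diff hA), mul_add]
  refine (norm_sub_le _ _).trans (add_le_add ?_ ?_) <;>
    refine norm_setIntegral_le_of_norm_le_const_ae (lt_top_iff_ne_top.2 ‹_›)
      (ae_restrict_of_ae_restrict_of_subset ?_ hB)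
  exacts [Set.subset_union_left, Set.subset_union_right]

section Folner

variable {G H : Type*} [Group G] [NormedAddCommGroup H] [InnerProductSpace ℂ H] [CompleteSpace H]
  {ρ : G →* (H ≃ₗᵢ[ℂ] H)} {c : G → H}

theorem folnerConstant_nonneg [MeasurableSpace G] (μ : Measure G) (S F : Set G) :
    0 ≤ folnerConstant μ S F :=
  Real.sSup_nonneg fun _ ⟨_, _, hx⟩ => hx ▸ by positivity

theorem measureReal_image_mul_left_symmDiff_le_folnerConstant_mul [MeasurableSpace G]
    [MeasurableMul G] (μ : Measure G) [μ.IsMulLeftInvariant] {S F : Set G} (hF0 : 0 < μ F)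
    (hFtop : μ F ≠ ⊤) {s : G} (hs : s ∈ S) :
    μ.real (((s * ·) '' F) ∆ F) ≤ folnerConstant μ S F * μ.real F := by
  have hFpos : 0 < μ.real F := ENNReal.toReal_pos hF0.ne' hFtop
  have hratio (t : G) : μ.real (((t * ·) '' F) ∆ F) / μ.real F ≤ 2 := by
    have htF : μ ((t * ·) '' F) = μ F := by rw [Set.image_mul_left, measure_preimage_mul]
    rw [div_le_iff₀ hFpos]
    calc μ.real (((t * ·) '' F) ∆ F) ≤ μ.real (((t * ·) '' F) ∪ F) :=
        measureReal_mono Set.symmDiff_subset_union (measure_union_ne_top (htF ▸ hFtop) hFtop)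
      _ ≤ μ.real ((t * ·) '' F) + μ.real F := measureReal_union_le _ _
      _ = 2 * μ.real F := by rw [measureReal_def, htF, ← measureReal_def]; ring
  rw [← div_le_iff₀ hFpos]
  exact le_csSup ⟨2, Set.forall_mem_image.2 fun t _ => hratio t⟩ ⟨s, hs, rfl⟩

theorem IsCocycle.affine_folnerAverage_sub_eq [MeasurableSpace G] [MeasurableMul G]
    (μ : Measure G) [μ.IsMulLeftInvariant] (hc : IsCocycle ρ c) {F : Set G}
    (hcF : IntegrableOn c F μ) (hF0 : μ F ≠ 0) (hFtop : μ F ≠ ⊤) (s : G) :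
    ρ s (folnerAverage μ c F) + c s - folnerAverage μ c F
      = (μ.real F)⁻¹ • (∫ g in (s * ·) '' F, c g ∂μ - ∫ g in F, c g ∂μ) := by
  have htranslate : ∫ g in (s * ·) '' F, c g ∂μ = ρ s (∫ g in F, c g ∂μ) + μ.real F • c s := by
    rw [(measurePreserving_mul_left μ s).setIntegral_image_emb
      (MeasurableEquiv.mulLeft s).measurableEmbedding]
    simp_rw [hc s]
    rw [integral_add ?_ (integrableOn_const (C := c s) hFtop), setIntegral_const]
    · exact congrArg (· + _) ((ρ s).toLinearIsometry.integral_comp_comm c)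
    · exact (ρ s).toLinearIsometry.toContinuousLinearMap.integrable_comp hcF
  have hF : (μ.real F)⁻¹ * μ.real F = 1 := inv_mul_cancel₀ (ENNReal.toReal_pos hF0 hFtop).ne'
  have hsmul (r : ℝ) (x : H) : ρ s (r • x) = r • ρ s x :=
    (ρ s).toLinearEquiv.toLinearMap.map_smul_of_tower r x
  rw [htranslate, folnerAverage, ← measureReal_def, hsmul, smul_sub, smul_add, smul_smul, hF,
    one_smul]

end Folner

section Equivalences

variable {G H : Type*} [Group G] [TopologicalSpace G] [IsTopologicalGroup G]
  [NormedAddCommGroup H] [InnerProductSpace ℂ H] {ρ : G →* (H ≃ₗᵢ[ℂ] H)} {S : Set G}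
  {b : C(G, H)}

theorem IsCocycle.norm_affine_folnerAverage_sub_le [CompleteSpace H] [MeasurableSpace G]
    [BorelSpace G] (μ : Measure G) [μ.IsHaarMeasure] {c : G → H} (hc : IsCocycle ρ c)
    (hcont : Continuous c) {F : Set G} (hFm : MeasurableSet F) (hFc : IsCompact (closure F))
    (hF0 : 0 < μ F) {s : G} {ε D : ℝ} (hD : 0 ≤ D)
    (hε : μ.real (((s * ·) '' F) ∆ F) ≤ ε * μ.real F)
    (hcD : ∀ x ∈ ((s * ·) '' F) ∆ F, ε * ‖c x‖ ≤ D) :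
    ‖ρ s (folnerAverage μ c F) + c s - folnerAverage μ c F‖ ≤ D := by
  set A := (s * ·) '' F
  have hAm : MeasurableSet A := by
    simpa only [A, Set.image_mul_left] using hFm.preimage (measurable_const_mul s⁻¹)
  have hAc : IsCompact (closure A) :=
    (Homeomorph.mulLeft s).image_closure F ▸ hFc.image (continuous_const_mul s)
  have hFtop : μ F ≠ ⊤ := measure_ne_top_of_subset subset_closure hFc.measure_ne_top
  have hAtop : μ A ≠ ⊤ := measure_ne_top_of_subset subset_closure hAc.measure_ne_top
  have hΔtop : μ (A ∆ F) ≠ ⊤ :=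
    measure_ne_top_of_subset Set.symmDiff_subset_union (measure_union_ne_top hAtop hFtop)
  have hFpos : 0 < μ.real F := ENNReal.toReal_pos hF0.ne' hFtop
  have hε0 : 0 ≤ ε := nonneg_of_mul_nonneg_left (measureReal_nonneg.trans hε) hFpos
  have hbound : ∀ᵐ x ∂μ.restrict (A ∆ F), ‖c x‖ ≤ D / ε := by
    rcases hε0.eq_or_lt with rfl | hεpos
    · have hnull : μ (A ∆ F) = 0 :=
        (measureReal_eq_zero_iff hΔtop).1 (le_antisymm (by simpa using hε) measureReal_nonneg)
      simp [Measure.restrict_eq_zero.2 hnull]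
    · exact ae_restrict_of_forall_mem (hAm.symmDiff hFm) fun x hx =>
        (le_div_iff₀' hεpos).2 (hcD x hx)
  have hcF : IntegrableOn c F μ := hcont.integrableOn_of_isCompact_closure hFm hFc
  have hcA : IntegrableOn c A μ := hcont.integrableOn_of_isCompact_closure hAm hAc
  rw [hc.affine_folnerAverage_sub_eq μ hcF hF0.ne' hFtop, norm_smul, norm_inv,
    Real.norm_of_nonneg measureReal_nonneg, inv_mul_le_iff₀ hFpos]
  calc ‖∫ g in A, c g ∂μ - ∫ g in F, c g ∂μ‖ ≤ D / ε * μ.real (A ∆ F) :=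
        norm_setIntegral_sub_setIntegral_le hAm hFm hcA hcF hΔtop hbound
    _ ≤ D / ε * (ε * μ.real F) := by gcongr
    _ ≤ μ.real F * D := by
        rcases hε0.eq_or_lt with rfl | hεpos
        · simpa using mul_nonneg hFpos.le hD
        · exact le_of_eq (by field_simp)

theorem IsCocycle.prec_wordLength_of_mem_closure_coboundaries (hS : IsCompact S)
    (hSsymm : S⁻¹ = S) (hSgen : Subgroup.closure S = ⊤) (hb : IsCocycle ρ b)
    (hcl : b ∈ closure (coboundaries ρ)) :
    Prec (fun g => ‖b g‖) fun g => (wordLength S g : ℝ) := by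
  rw [prec_wordLength_iff hS hSsymm hSgen b.continuous.norm]
  intro ε hε
  obtain ⟨f, ⟨v, hv⟩, hclose⟩ :=
    ContinuousMap.mem_closure_iff_forall_isCompact_dist_lt.1 hcl S hS ε hε
  have hsmall (s : G) (hs : s ∈ S) : ‖b s - (v - ρ s v)‖ ≤ ε := by
    rw [← hv, ← dist_eq_norm]
    exact (hclose s hs).le
  refine ⟨2 * ‖v‖, fun g => ?_⟩
  calc ‖b g‖ ≤ ‖b g - (v - ρ g v)‖ + ‖v - ρ g v‖ := norm_le_norm_sub_add _ _
    _ ≤ ε * wordLength S g + (‖v‖ + ‖ρ g v‖) := by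
        rw [mul_comm]
        exact add_le_add ((hb.sub_coboundary v).norm_le_wordLength_mul hSsymm hSgen hsmall g)
          (norm_sub_le _ _)
    _ = ε * wordLength S g + 2 * ‖v‖ := by rw [LinearIsometryEquiv.norm_map]; ring

theorem IsCocycle.isAlmostFixedSeq_folnerAverage [CompleteSpace H] [MeasurableSpace G]
    [BorelSpace G] (μ : Measure G) [μ.IsHaarMeasure] (hS : IsCompact S) (hSsymm : S⁻¹ = S)
    (hSgen : Subgroup.closure S = ⊤) {F : ℕ → Set G} (hFmeas : ∀ n, MeasurableSet (F n))
    (hFbdd : ∀ n, IsCompact (closure (F n))) (hFpos : ∀ n, 0 < μ (F n))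
    (hFol : Tendsto (fun n => folnerConstant μ S (F n)) atTop (𝓝 0))
    (hctrl : ∃ c > (0:ℝ), ∀ n, ∀ g ∈ F n,
      (wordLength S g : ℝ) * folnerConstant μ S (F n) ≤ c)
    (hb : IsCocycle ρ b) (hprec : Prec (fun g => ‖b g‖) fun g => (wordLength S g : ℝ)) :
    IsAlmostFixedSeq ρ b S fun n => folnerAverage μ b (F n) := by
  obtain ⟨c, hc, hctrl⟩ := hctrl
  intro δ hδ
  obtain ⟨C, hC⟩ := (prec_wordLength_iff hS hSsymm hSgen b.continuous.norm).1 hprec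
    (δ / (2 * c)) (by positivity)
  obtain ⟨M, hM⟩ := hS.exists_bound_of_continuousOn b.continuous.norm.continuousOn
  obtain ⟨N, hN⟩ := eventually_atTop.1 <| (hFol.mul_const (|C| + |M|)).eventually
    (ge_mem_nhds (show 0 * (|C| + |M|) < δ / 2 by simpa using half_pos hδ))
  refine ⟨N, fun n hn s hs => ?_⟩
  set ε := folnerConstant μ S (F n)
  have hFtop : μ (F n) ≠ ⊤ := measure_ne_top_of_subset subset_closure (hFbdd n).measure_ne_top
  refine hb.norm_affine_folnerAverage_sub_le μ b.continuous (hFmeas n) (hFbdd n) (hFpos n)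
    hδ.le (measureReal_image_mul_left_symmDiff_le_folnerConstant_mul μ (hFpos n) hFtop hs)
    fun x hx => ?_
  obtain ⟨y, hy, hxy⟩ : ∃ y ∈ F n, ‖b x‖ ≤ ‖b y‖ + |M| := by
    rcases Set.symmDiff_subset_union hx with ⟨y, hy, rfl⟩ | hx
    · exact ⟨y, hy, (hb.norm_mul_le s y).trans
        (add_le_add_right ((le_abs_self _).trans ((hM s hs).trans (le_abs_self M))) _)⟩
    · exact ⟨x, hx, le_add_of_nonneg_right (abs_nonneg M)⟩
  have hε0 : 0 ≤ ε := folnerConstant_nonneg μ S (F n)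
  calc ε * ‖b x‖ ≤ ε * (δ / (2 * c) * wordLength S y + (|C| + |M|)) := by
        gcongr
        linarith [hC y, le_abs_self C]
    _ = δ / (2 * c) * (wordLength S y * ε) + ε * (|C| + |M|) := by ring
    _ ≤ δ / (2 * c) * c + δ / 2 := by gcongr; exacts [hctrl n y hy, hN n hn]
    _ = δ := by field_simp; ring

theorem IsCocycle.mem_closure_coboundaries_of_isAlmostFixedSeq [LocallyCompactSpace G]
    (hρ : ∀ v : H, Continuous fun g => ρ g v) (hSsymm : S⁻¹ = S)
    (hSgen : Subgroup.closure S = ⊤) (hb : IsCocycle ρ b) {v : ℕ → H}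
    (hv : IsAlmostFixedSeq ρ b S v) : b ∈ closure (coboundaries ρ) := by
  rw [ContinuousMap.mem_closure_iff_forall_isCompact_dist_lt]
  intro K hK ε hε
  obtain ⟨C, hC0, hC⟩ := hK.exists_forall_cocycle_norm_le (ρ := ρ) hSsymm hSgen
  obtain ⟨N, hN⟩ := hv (ε / (C + 1)) (by positivity)
  set w := v N
  refine ⟨⟨fun g => w - ρ g w, continuous_const.sub (hρ w)⟩, ⟨w, fun g => rfl⟩, fun k hk => ?_⟩
  have hsmall (s : G) (hs : s ∈ S) : ‖b s - (w - ρ s w)‖ ≤ ε / (C + 1) := by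
    rw [show b s - (w - ρ s w) = ρ s w + b s - w by abel]
    exact hN N le_rfl s hs
  calc dist (b k) (w - ρ k w) = ‖b k - (w - ρ k w)‖ := dist_eq_norm _ _
    _ ≤ C * (ε / (C + 1)) := hC _ (hb.sub_coboundary w)
        (b.continuous.sub (continuous_const.sub (hρ w))) _ (by positivity) hsmall k hk
    _ < ε := by rw [mul_div_assoc', div_lt_iff₀ (by positivity)]; linarith

end Equivalences

theorem controlled_folner_tfae_general
    (G : Type*) [Group G] [TopologicalSpace G] [IsTopologicalGroup G] [LocallyCompactSpace G]
    [MeasurableSpace G] [BorelSpace G] (μ : Measure G) [μ.IsHaarMeasure]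
    (S : Set G) (hScpt : IsCompact S) (hSsymm : S⁻¹ = S) (hSgen : Subgroup.closure S = ⊤)
    -- a controlled Følner sequence:
    (F : ℕ → Set G) (hFmeas : ∀ n, MeasurableSet (F n))
    (hFbdd : ∀ n, IsCompact (closure (F n)))
    (hFpos : ∀ n, 0 < μ (F n))
    (hFol : Tendsto (fun n => folnerConstant μ S (F n)) atTop (𝓝 0))
    (hctrl : ∃ c > (0:ℝ), ∀ n, ∀ g ∈ F n,
      (wordLength S g : ℝ) * folnerConstant μ S (F n) ≤ c)
    -- a 1-cocycle `b` for a continuous unitary representation `ρ` :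
    (H : Type*) [NormedAddCommGroup H] [InnerProductSpace ℂ H] [CompleteSpace H]
    (ρ : G →* (H ≃ₗᵢ[ℂ] H)) (hρ : ∀ v : H, Continuous fun g => ρ g v)
    (b : C(G, H)) (hb : ∀ g h : G, b (g * h) = ρ g (b h) + b g) :
    (b ∈ closure (coboundaries ρ) ↔
      Prec (fun g => ‖b g‖) (fun g => (wordLength S g : ℝ))) ∧
    (b ∈ closure (coboundaries ρ) ↔
      ∀ δ > (0:ℝ), ∃ N : ℕ, ∀ n ≥ N, ∀ s ∈ S,
        ‖(ρ s (folnerAverage μ b (F n)) + b s) - folnerAverage μ b (F n)‖ ≤ δ) := by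
  have hb : IsCocycle ρ b := hb
  have h12 := hb.prec_wordLength_of_mem_closure_coboundaries hScpt hSsymm hSgen
  have h23 := hb.isAlmostFixedSeq_folnerAverage μ hScpt hSsymm hSgen hFmeas hFbdd hFpos hFol hctrl
  have h31 : IsAlmostFixedSeq ρ b S (fun n => folnerAverage μ b (F n)) → _ :=
    hb.mem_closure_coboundaries_of_isAlmostFixedSeq hρ hSsymm hSgen
  exact ⟨⟨h12, h31 ∘ h23⟩, ⟨h23 ∘ h12, h31⟩⟩

/-- For groups with a controlled Følner sequence, the following are equivalent for a
1-cocycle `b` : (1) `b` is an almost coboundary; (2) `b` has sublinear growth; (3) the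
Følner averages of `b` form a sequence of almost fixed points of the affine action. -/
theorem controlled_folner_tfae
    (G : Type*) [Group G] [TopologicalSpace G] [IsTopologicalGroup G] [LocallyCompactSpace G]
    [MeasurableSpace G] [BorelSpace G] (μ : Measure G) [μ.IsHaarMeasure]
    (S : Set G) (hScpt : IsCompact S) (hSsymm : S⁻¹ = S) (hSgen : Subgroup.closure S = ⊤)
    -- a controlled Følner sequence:
    (F : ℕ → Set G) (hFmeas : ∀ n, MeasurableSet (F n))
    (hFbdd : ∀ n, IsCompact (closure (F n)))
    (hFpos : ∀ n, 0 < μ (F n)) (hFfin : ∀ n, μ (F n) < ⊤)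
    (hFol : Tendsto (fun n => folnerConstant μ S (F n)) atTop (𝓝 0))
    (hctrl : ∃ c > (0:ℝ), ∀ n, ∀ g ∈ F n,
      (wordLength S g : ℝ) * folnerConstant μ S (F n) ≤ c)
    -- a 1-cocycle `b` for a continuous unitary representation `ρ` :
    (H : Type*) [NormedAddCommGroup H] [InnerProductSpace ℂ H] [CompleteSpace H]
    (ρ : G →* (H ≃ₗᵢ[ℂ] H)) (hρ : ∀ v : H, Continuous fun g => ρ g v)
    (b : C(G, H)) (hb : ∀ g h : G, b (g * h) = ρ g (b h) + b g) :
    (b ∈ closure (coboundaries ρ) ↔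
      Prec (fun g => ‖b g‖) (fun g => (wordLength S g : ℝ))) ∧
    (b ∈ closure (coboundaries ρ) ↔
      ∀ δ > (0:ℝ), ∃ N : ℕ, ∀ n ≥ N, ∀ s ∈ S,
        ‖(ρ s (folnerAverage μ b (F n)) + b s) - folnerAverage μ b (F n)‖ ≤ δ) :=
  controlled_folner_tfae_general G μ S hScpt hSsymm hSgen F hFmeas hFbdd hFpos hFol hctrl H ρ hρ b
    hb
end
end

section
/- Let G be a locally compact, a-T-menable group. For every proper function f : G → [1,∞) (i.e. for every R there is a compact set outside of which f ≥ R), there exists a continuous, conditionally negative definite, proper function ψ on G such that ψ(g) ≤ f(g) for all g ∈ G. -/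
/-!
Let `ψ₀` be a proper continuous conditionally negative definite function. By Schoenberg's theorem
each `1 - exp (-ψ₀ / t)` with `t > 0` is again conditionally negative definite: the matrix
`ψ₀(gᵢ) + ψ₀(gⱼ) - ψ₀(gᵢ⁻¹gⱼ)` is positive semidefinite, hence so is its entrywise exponential
(Schur product theorem), and `exp (-ψ₀(gᵢ⁻¹gⱼ))` is that exponential rescaled by `exp (-ψ₀(gᵢ))`,
`exp (-ψ₀(gⱼ))`. So is `ψ = ∑ₖ (1 - exp (-ψ₀ / tₖ))`. Each summand is at most `min 1 (ψ₀ / tₖ)`,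
so `ψ` grows as slowly as we like: with `tₖ = 2ᵏ⁺¹ bₖ`, where `bₖ ≥ 1` bounds `ψ₀` on the
relatively compact set `{f < k + 2}`, the summands with `k ≥ m` add up to at most `1` wherever
`f < m + 2`, whence `ψ ≤ f`. Yet `ψ` is still proper, since the `k`-th summand is at least `1/2`
wherever `ψ₀ ≥ tₖ`.
-/

open scoped BigOperators

noncomputable section

/-- A conditionally negative definite function on a group:
`ψ(1) = 0`, `ψ(g⁻¹) = ψ(g)`, and `∑ᵢⱼ λᵢλⱼ ψ(gᵢ⁻¹gⱼ) ≤ 0` whenever `∑ᵢ λᵢ = 0`. -/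
def IsCondNegDef {G : Type*} [Group G] (ψ : G → ℝ) : Prop :=
  ψ 1 = 0 ∧ (∀ g : G, ψ g⁻¹ = ψ g) ∧
  ∀ (n : ℕ) (g : Fin n → G) (lam : Fin n → ℝ), (∑ i, lam i = 0) →
    ∑ i, ∑ j, lam i * lam j * ψ ((g i)⁻¹ * g j) ≤ 0

/-- A function on a topological space is proper if it tends to `∞` at infinity. -/
def IsProperFn {G : Type*} [TopologicalSpace G] (ψ : G → ℝ) : Prop :=
  ∀ R : ℝ, ∃ K : Set G, IsCompact K ∧ ∀ g ∉ K, R ≤ ψ g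

open Real

namespace Matrix

variable {ι : Type*} [Fintype ι]

lemma PosSemidef.map_pow {A : Matrix ι ι ℝ} (hA : A.PosSemidef) (k : ℕ) :
    (A.map (· ^ k)).PosSemidef := by
  induction k with
  | zero =>
    convert posSemidef_vecMulVec_self_star (1 : ι → ℝ) using 1
    ext i j
    simp [vecMulVec]
  | succ k ih =>
    have h : A.map (· ^ (k + 1)) = A.map (· ^ k) ⊙ A := by
      ext i j
      simp [pow_succ]
    exact h ▸ ih.hadamard hA

lemma star_dotProduct_mulVec_eq_sum_sum (M : Matrix ι ι ℝ) (x : ι → ℝ) :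
    star x ⬝ᵥ (M *ᵥ x) = ∑ i, ∑ j, x i * x j * M i j := by
  simp only [dotProduct, mulVec, star_trivial, Finset.mul_sum]
  exact Finset.sum_congr rfl fun i _ => Finset.sum_congr rfl fun j _ => by ring

lemma PosSemidef.map_exp {A : Matrix ι ι ℝ} (hA : A.PosSemidef) : (A.map exp).PosSemidef := by
  refine .of_dotProduct_mulVec_nonneg (hA.isHermitian.map _ fun _ => rfl) fun x => ?_
  have hsum : HasSum (fun k => star x ⬝ᵥ (A.map (· ^ k) *ᵥ x) / k.factorial)
      (star x ⬝ᵥ (A.map exp *ᵥ x)) := by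
    simp only [star_dotProduct_mulVec_eq_sum_sum, map_apply, Finset.sum_div]
    refine hasSum_sum fun i _ => hasSum_sum fun j _ => ?_
    simpa [exp_eq_exp_ℝ, mul_div_assoc] using
      (NormedSpace.expSeries_div_hasSum_exp (A i j)).mul_left (x i * x j)
  exact hsum.nonneg fun k =>
    div_nonneg ((hA.map_pow k).dotProduct_mulVec_nonneg x) (by positivity)

end Matrix

namespace IsCondNegDef

variable {G : Type*} [Group G] {ψ : G → ℝ}

lemma apply_inv_mul_comm (hψ : IsCondNegDef ψ) (g h : G) : ψ (h⁻¹ * g) = ψ (g⁻¹ * h) := by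
  rw [← hψ.2.1, mul_inv_rev, inv_inv]

/-- Twice the Gromov product at `1`. Its positivity is the defining inequality of `ψ` at the points
`1, g₁, …, gₙ` with weight `-∑ᵢ xᵢ` at `1`. -/
lemma posSemidef_gromovMatrix (hψ : IsCondNegDef ψ) {n : ℕ} (g : Fin n → G) :
    (Matrix.of fun i j => ψ (g i) + ψ (g j) - ψ ((g i)⁻¹ * g j)).PosSemidef := by
  refine .of_dotProduct_mulVec_nonneg ?_ fun x => ?_
  · ext i j
    simp only [Matrix.conjTranspose_apply, Matrix.of_apply, star_trivial,
      hψ.apply_inv_mul_comm (g i) (g j)]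
    ring
  · have h := hψ.2.2 (n + 1) (Fin.cons 1 g) (Fin.cons (-∑ i, x i) x) (by simp [Fin.sum_cons])
    simp only [Fin.sum_univ_succ, Fin.cons_zero, Fin.cons_succ, inv_one, one_mul, mul_one, hψ.1,
      hψ.2.1, mul_zero, neg_mul, mul_neg, neg_zero, zero_add, Finset.sum_neg_distrib] at h
    rw [Matrix.star_dotProduct_mulVec_eq_sum_sum]
    simp only [Matrix.of_apply, mul_sub, mul_add, Finset.sum_sub_distrib, Finset.sum_add_distrib,
      Finset.sum_neg_distrib, Finset.mul_sum, Finset.sum_mul] at h ⊢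
    have hswap : ∑ a, ∑ i, x i * x a * ψ (g a) = ∑ i, ∑ a, x i * x a * ψ (g a) :=
      Finset.sum_comm
    linarith

lemma sum_sum_mul_exp_neg_nonneg (hψ : IsCondNegDef ψ) {n : ℕ} (g : Fin n → G)
    (lam : Fin n → ℝ) : 0 ≤ ∑ i, ∑ j, lam i * lam j * exp (-ψ ((g i)⁻¹ * g j)) := by
  have h := (hψ.posSemidef_gromovMatrix g).map_exp.dotProduct_mulVec_nonneg
    fun i => lam i * exp (-ψ (g i))
  rw [Matrix.star_dotProduct_mulVec_eq_sum_sum] at h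
  refine h.trans_eq (Finset.sum_congr rfl fun i _ => Finset.sum_congr rfl fun j _ => ?_)
  simp only [Matrix.map_apply, Matrix.of_apply, exp_sub, exp_add, exp_neg]
  field_simp

lemma one_sub_exp_neg (hψ : IsCondNegDef ψ) : IsCondNegDef fun g => 1 - exp (-ψ g) := by
  refine ⟨by simp [hψ.1], fun g => by simp only [hψ.2.1], fun n g lam hlam => ?_⟩
  have hconst : ∑ i, ∑ j, lam i * lam j = 0 := by rw [← Finset.sum_mul_sum, hlam, zero_mul]
  have := hψ.sum_sum_mul_exp_neg_nonneg g lam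
  simp only [mul_sub, mul_one, Finset.sum_sub_distrib, hconst]
  linarith

lemma div_const (hψ : IsCondNegDef ψ) {c : ℝ} (hc : 0 ≤ c) : IsCondNegDef fun g => ψ g / c := by
  refine ⟨by simp [hψ.1], fun g => by simp only [hψ.2.1], fun n g lam hlam => ?_⟩
  calc ∑ i, ∑ j, lam i * lam j * (ψ ((g i)⁻¹ * g j) / c)
      = (∑ i, ∑ j, lam i * lam j * ψ ((g i)⁻¹ * g j)) / c := by
        simp only [Finset.sum_div, mul_div_assoc]
    _ ≤ 0 := div_nonpos_of_nonpos_of_nonneg (hψ.2.2 n g lam hlam) hc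

protected lemma tsum {ψ : ℕ → G → ℝ} (hψ : ∀ k, IsCondNegDef (ψ k))
    (hs : ∀ g, Summable fun k => ψ k g) : IsCondNegDef fun g => ∑' k, ψ k g := by
  refine ⟨by simp [fun k => (hψ k).1], fun g => by simp only [fun k => (hψ k).2.1 g],
    fun n g lam hlam => ?_⟩
  have hsum : HasSum (fun k => ∑ i, ∑ j, lam i * lam j * ψ k ((g i)⁻¹ * g j))
      (∑ i, ∑ j, lam i * lam j * ∑' k, ψ k ((g i)⁻¹ * g j)) :=
    hasSum_sum fun i _ => hasSum_sum fun j _ => (hs _).hasSum.mul_left _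
  exact hsum.nonpos fun k => (hψ k).2.2 n g lam hlam

end IsCondNegDef

lemma one_sub_exp_neg_nonneg {a : ℝ} (ha : 0 ≤ a) : 0 ≤ 1 - exp (-a) :=
  sub_nonneg.2 (exp_le_one_iff.2 (neg_nonpos.2 ha))

lemma one_sub_exp_neg_le (a : ℝ) : 1 - exp (-a) ≤ a := by
  linarith [add_one_le_exp (-a)]

lemma half_le_one_sub_exp_neg {a : ℝ} (ha : 1 ≤ a) : 1 / 2 ≤ 1 - exp (-a) := by
  linarith [exp_le_exp.2 (neg_le_neg ha), exp_neg_one_lt_half]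

lemma IsProperFn.bddAbove_image_lt {X : Type*} [TopologicalSpace X] {f ψ : X → ℝ}
    (hf : IsProperFn f) (hψ : Continuous ψ) (R : ℝ) : BddAbove (ψ '' {x | f x < R}) := by
  obtain ⟨K, hK, hKf⟩ := hf R
  refine (hK.image hψ).bddAbove.mono (Set.image_mono fun x hx => ?_)
  by_contra hxK
  exact (hKf x hxK).not_gt hx

def oneSubExpSeries {X : Type*} (t : ℕ → ℝ) (ψ : X → ℝ) (x : X) : ℝ :=
  ∑' k, (1 - exp (-(ψ x / t k)))

section OneSubExpSeries

variable {X : Type*} {t : ℕ → ℝ} {ψ : X → ℝ}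
  (ht : ∀ k, 0 < t k) (hsum : Summable fun k => (t k)⁻¹) (hψ : ∀ x, 0 ≤ ψ x)
include ht hψ

omit hsum in
lemma one_sub_exp_neg_div_nonneg (x : X) (k : ℕ) : 0 ≤ 1 - exp (-(ψ x / t k)) :=
  one_sub_exp_neg_nonneg (div_nonneg (hψ x) (ht k).le)

include hsum

lemma summable_one_sub_exp_neg_div (x : X) : Summable fun k => 1 - exp (-(ψ x / t k)) :=
  (hsum.mul_left (ψ x)).of_nonneg_of_le (one_sub_exp_neg_div_nonneg ht hψ x) fun _ =>
    one_sub_exp_neg_le _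

omit hsum in
lemma oneSubExpSeries_nonneg (x : X) : 0 ≤ oneSubExpSeries t ψ x :=
  tsum_nonneg (one_sub_exp_neg_div_nonneg ht hψ x)

lemma continuous_oneSubExpSeries [TopologicalSpace X] [LocallyCompactSpace X]
    (hcont : Continuous ψ) : Continuous (oneSubExpSeries t ψ) := by
  refine continuous_iff_continuousAt.2 fun x => ?_
  obtain ⟨C, hC, hCx⟩ := exists_compact_mem_nhds x
  obtain ⟨M, hM⟩ := (hC.image hcont).bddAbove
  refine (continuousOn_tsum (fun k => by fun_prop) (hsum.mul_left M) fun k y hy => ?_).continuousAt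
    hCx
  rw [Real.norm_of_nonneg (one_sub_exp_neg_div_nonneg ht hψ y k)]
  exact (one_sub_exp_neg_le _).trans
    (mul_le_mul_of_nonneg_right (hM (Set.mem_image_of_mem ψ hy)) (inv_nonneg.2 (ht k).le))

lemma isProperFn_oneSubExpSeries [TopologicalSpace X] (hproper : IsProperFn ψ) :
    IsProperFn (oneSubExpSeries t ψ) := by
  intro R
  obtain ⟨n, hn⟩ := exists_nat_ge (2 * R)
  obtain ⟨K, hK, hKψ⟩ := hproper (∑ k ∈ Finset.range n, t k)
  refine ⟨K, hK, fun x hx => ?_⟩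
  have hterm : ∀ k ∈ Finset.range n, 1 / 2 ≤ 1 - exp (-(ψ x / t k)) := fun k hk =>
    half_le_one_sub_exp_neg <| (one_le_div (ht k)).2 <|
      (Finset.single_le_sum (fun i _ => (ht i).le) hk).trans (hKψ x hx)
  calc R ≤ ∑ _k ∈ Finset.range n, (1 / 2 : ℝ) := by simp; linarith
    _ ≤ ∑ k ∈ Finset.range n, (1 - exp (-(ψ x / t k))) := Finset.sum_le_sum hterm
    _ ≤ oneSubExpSeries t ψ x :=
      (summable_one_sub_exp_neg_div ht hsum hψ x).sum_le_tsum _ fun k _ =>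
        one_sub_exp_neg_div_nonneg ht hψ x k

lemma oneSubExpSeries_le_of_forall_ge {x : X} (m : ℕ) (hm : ∀ k ≥ m, ψ x ≤ t k / 2 ^ (k + 1)) :
    oneSubExpSeries t ψ x ≤ m + 1 := by
  have head : ∑ k ∈ Finset.range m, (1 - exp (-(ψ x / t k))) ≤ m := by
    simpa using Finset.sum_le_sum fun k (_ : k ∈ Finset.range m) =>
      sub_le_self 1 (exp_pos (-(ψ x / t k))).le
  have tail : ∑' k, (1 - exp (-(ψ x / t (k + m)))) ≤ 1 := by
    calc ∑' k, (1 - exp (-(ψ x / t (k + m)))) ≤ ∑' k : ℕ, (1 : ℝ) / 2 / 2 ^ k := by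
          refine Summable.tsum_le_tsum (fun k => ?_)
            ((summable_nat_add_iff m).2 (summable_one_sub_exp_neg_div ht hsum hψ x))
            (summable_geometric_two' 1)
          calc 1 - exp (-(ψ x / t (k + m))) ≤ ψ x / t (k + m) := one_sub_exp_neg_le _
            _ ≤ 1 / 2 ^ (k + m + 1) := (div_le_div_iff₀ (ht _) (by positivity)).2 <| by
                simpa using (le_div_iff₀ (by positivity)).1 (hm (k + m) (by omega))
            _ ≤ 1 / 2 / 2 ^ k := by
                rw [div_div, ← pow_succ']
                gcongr
                · norm_num
                · omega
      _ = 1 := tsum_geometric_two' 1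
  rw [oneSubExpSeries, ← (summable_one_sub_exp_neg_div ht hsum hψ x).sum_add_tsum_nat_add m]
  linarith

lemma IsCondNegDef.oneSubExpSeries [Group X] (hcnd : IsCondNegDef ψ) :
    IsCondNegDef (oneSubExpSeries t ψ) :=
  IsCondNegDef.tsum (fun k => (hcnd.div_const (ht k).le).one_sub_exp_neg)
    (summable_one_sub_exp_neg_div ht hsum hψ)

end OneSubExpSeries

theorem aTmenable_slow_cnd_general
    (G : Type*) [Group G] [TopologicalSpace G] [LocallyCompactSpace G]
    -- G is a-T-menable: it has a continuous, proper, conditionally negative definite function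
    (hatm : ∃ ψ₀ : G → ℝ, Continuous ψ₀ ∧ (∀ g, 0 ≤ ψ₀ g) ∧ IsCondNegDef ψ₀ ∧
      IsProperFn ψ₀)
    (f : G → ℝ) (hf1 : ∀ g : G, 1 ≤ f g) (hfproper : IsProperFn f) :
    ∃ ψ : G → ℝ, Continuous ψ ∧ (∀ g, 0 ≤ ψ g) ∧ IsCondNegDef ψ ∧ IsProperFn ψ ∧
      ∀ g : G, ψ g ≤ f g := by
  obtain ⟨ψ₀, hcont, hψ₀, hcnd, hproper⟩ := hatm
  choose b hb1 hb using fun n : ℕ => (hfproper.bddAbove_image_lt hcont (n + 2)).exists_ge 1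
  set t : ℕ → ℝ := fun k => 2 ^ (k + 1) * b k
  have ht : ∀ k, 0 < t k := fun k => mul_pos (by positivity) (by linarith [hb1 k])
  have hsum : Summable fun k => (t k)⁻¹ := by
    refine (summable_geometric_two' 1).of_nonneg_of_le (fun k => (inv_pos.2 (ht k)).le) fun k => ?_
    rw [div_div, ← pow_succ', one_div]
    exact inv_anti₀ (by positivity) (le_mul_of_one_le_right (by positivity) (hb1 k))
  refine ⟨oneSubExpSeries t ψ₀, continuous_oneSubExpSeries ht hsum hψ₀ hcont,
    oneSubExpSeries_nonneg ht hψ₀, hcnd.oneSubExpSeries ht hsum hψ₀,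
    isProperFn_oneSubExpSeries ht hsum hψ₀ hproper, fun g => ?_⟩
  set m := ⌊f g - 1⌋₊
  have hm_le : (m : ℝ) + 1 ≤ f g := by linarith [Nat.floor_le (sub_nonneg.2 (hf1 g))]
  have hm_lt : f g < m + 2 := by linarith [Nat.lt_floor_add_one (f g - 1)]
  refine (oneSubExpSeries_le_of_forall_ge ht hsum hψ₀ m fun k hk => ?_).trans hm_le
  rw [mul_div_cancel_left₀ _ (by positivity)]
  exact hb k _ ⟨g, hm_lt.trans_le (by gcongr), rfl⟩

/-- On an a-T-menable locally compact group, below any proper function `f ≥ 1` there is a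
proper continuous conditionally negative definite function. -/
theorem aTmenable_slow_cnd
    (G : Type*) [Group G] [TopologicalSpace G] [IsTopologicalGroup G] [LocallyCompactSpace G]
    -- G is a-T-menable: it has a continuous, proper, conditionally negative definite function
    (hatm : ∃ ψ₀ : G → ℝ, Continuous ψ₀ ∧ (∀ g, 0 ≤ ψ₀ g) ∧ IsCondNegDef ψ₀ ∧
      IsProperFn ψ₀)
    (f : G → ℝ) (hf1 : ∀ g : G, 1 ≤ f g) (hfproper : IsProperFn f) :
    ∃ ψ : G → ℝ, Continuous ψ ∧ (∀ g, 0 ≤ ψ g) ∧ IsCondNegDef ψ ∧ IsProperFn ψ ∧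
      ∀ g : G, ψ g ≤ f g :=
  aTmenable_slow_cnd_general G hatm f hf1 hfproper
end
end

section
/- Let u : ℝ₊ → ℝ be a proper function (u(t) → ∞ as t → ∞) with u(t) ≥ 1 for all t ∈ ℝ₊. Then there exists a proper Bernstein function F : ℝ₊ → ℝ₊ (F(t) → ∞ as t → ∞) such that F(t) ≤ u(t) for all t ∈ ℝ₊. -/
/-!
Put unit masses at points `x n > 0` with `x (n + 1) ≤ x n / 2`. Then `μ = ∑ δ_{x n}` has a finite
first moment, so `F t = ∫ (1 - e^{-tx}) dμ = ∑ (1 - e^{-t x n})` is Bernstein, and `F` is proper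
because every term tends to `1`. The terms with `2 t x n ≤ 1` form a geometric tail of total at
most `1` and the others are at most `1` each; so if exactly `k + 1` indices have `2 t x n > 1`,
then `F t ≤ k + 2`. Choosing `x k` so small that `u ≥ k + 2` beyond `1 / (2 x k)` gives `F ≤ u`.
-/

open MeasureTheory Filter Topology
open scoped ENNReal

noncomputable section

/-- A Bernstein function: `F(t) = at + ∫₀^∞ (1 − e^{−tx}) dμ(x)` for some `a ≥ 0` and some
Borel measure `μ` on `(0,∞)` with `μ[ε,∞) < ∞` for all `ε > 0` and `∫₀¹ x dμ(x) < ∞`. -/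
def IsBernstein (F : ℝ → ℝ) : Prop :=
  ContinuousOn F (Set.Ici 0) ∧ (∀ t ≥ (0:ℝ), 0 ≤ F t) ∧
  ∃ (a : ℝ) (μ : Measure ℝ), 0 ≤ a ∧
    μ (Set.Iic 0) = 0 ∧
    (∀ ε > (0:ℝ), μ (Set.Ici ε) < ⊤) ∧
    IntegrableOn (fun x => x) (Set.Ioc 0 1) μ ∧
    ∀ t > (0:ℝ), F t = a * t + ∫ x, (1 - Real.exp (-(t * x))) ∂μ

namespace Real

lemma one_sub_exp_neg_le_self (y : ℝ) : 1 - exp (-y) ≤ y := by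
  linarith [one_sub_le_exp_neg y]

lemma one_sub_exp_neg_nonneg {y : ℝ} (hy : 0 ≤ y) : 0 ≤ 1 - exp (-y) :=
  sub_nonneg.2 (exp_le_one_iff.2 (neg_nonpos.2 hy))

end Real

section BernsteinOfLevyMeasure

variable {μ : Measure ℝ}

lemma ae_pos_of_measure_Iic_zero (hμ : μ (Set.Iic 0) = 0) : ∀ᵐ x ∂μ, 0 < x :=
  measure_mono_null (fun x (hx : ¬0 < x) => not_lt.1 hx) hμ

theorem isBernstein_integral_one_sub_exp_neg_mul (hμ : μ (Set.Iic 0) = 0)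
    (hμ1 : Integrable (fun x => x) μ) :
    IsBernstein fun t => ∫ x, (1 - Real.exp (-(t * x))) ∂μ := by
  have hpos := ae_pos_of_measure_Iic_zero hμ
  have hbound : ∀ {t x : ℝ}, 0 ≤ t → 0 < x → ‖1 - Real.exp (-(t * x))‖ ≤ t * x := fun ht hx => by
    rw [Real.norm_of_nonneg (Real.one_sub_exp_neg_nonneg (by positivity))]
    exact Real.one_sub_exp_neg_le_self _
  refine ⟨fun t₀ _ => ?_, fun t ht => integral_nonneg_of_ae (hpos.mono fun x hx =>
      Real.one_sub_exp_neg_nonneg (by positivity)), 0, μ, le_rfl, hμ,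
    fun ε hε => hμ1.measure_ge_lt_top hε, hμ1.integrableOn, fun t _ => by simp⟩
  refine continuousWithinAt_of_dominated (bound := fun x => (t₀ + 1) * x)
    (Eventually.of_forall fun t => by fun_prop) ?_ (hμ1.const_mul _)
    (ae_of_all _ fun x => (by fun_prop : Continuous _).continuousWithinAt)
  filter_upwards [self_mem_nhdsWithin,
    nhdsWithin_le_nhds (eventually_le_nhds (lt_add_one t₀))] with t (ht : 0 ≤ t) htR
  filter_upwards [hpos] with x hx
  exact (hbound ht hx).trans (by gcongr)

end BernsteinOfLevyMeasure

section HalvingSequence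

variable {x : ℕ → ℝ}

lemma le_mul_half_pow_of_halving (hx : ∀ n, x (n + 1) ≤ x n / 2) (m j : ℕ) :
    x (j + m) ≤ x m * (1 / 2) ^ j := by
  induction j with
  | zero => simp
  | succ j ih =>
    calc x (j + 1 + m) = x (j + m + 1) := by rw [Nat.add_right_comm]
      _ ≤ x (j + m) / 2 := hx _
      _ ≤ x m * (1 / 2) ^ j / 2 := by gcongr
      _ = x m * (1 / 2) ^ (j + 1) := by ring

lemma summable_of_halving (hx0 : ∀ n, 0 ≤ x n) (hx : ∀ n, x (n + 1) ≤ x n / 2) :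
    Summable x :=
  .of_nonneg_of_le hx0 (fun n => by simpa using le_mul_half_pow_of_halving hx 0 n)
    (summable_geometric_two.mul_left (x 0))

lemma tsum_nat_add_le_two_mul_of_halving (hx0 : ∀ n, 0 ≤ x n)
    (hx : ∀ n, x (n + 1) ≤ x n / 2) (m : ℕ) : ∑' j, x (j + m) ≤ 2 * x m :=
  calc ∑' j, x (j + m) ≤ ∑' j, x m * (1 / 2) ^ j :=
        (summable_nat_add_iff m).2 (summable_of_halving hx0 hx) |>.tsum_le_tsum
          (le_mul_half_pow_of_halving hx m) (summable_geometric_two.mul_left _)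
    _ = 2 * x m := by rw [tsum_mul_left, tsum_geometric_two, mul_comm]

lemma exists_halving_seq (N : ℕ → ℝ) :
    ∃ x : ℕ → ℝ, (∀ n, 0 < x n) ∧ (∀ n, x (n + 1) ≤ x n / 2) ∧ ∀ n, 2 * N n * x n ≤ 1 := by
  set A : ℕ → ℝ := fun n => 1 + ∑ k ∈ Finset.range (n + 1), |N k|
  have hA1 : ∀ n, 1 ≤ A n := fun n => le_add_of_nonneg_right (by positivity)
  have hAmono : ∀ n, A n ≤ A (n + 1) := fun n => by
    simp only [A, Finset.sum_range_succ _ (n + 1)]; linarith [abs_nonneg (N (n + 1))]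
  have hNA : ∀ n, N n ≤ A n := fun n =>
    calc N n ≤ |N n| := le_abs_self _
      _ ≤ ∑ k ∈ Finset.range (n + 1), |N k| :=
        Finset.single_le_sum (fun k _ => abs_nonneg (N k)) (Finset.self_mem_range_succ n)
      _ ≤ A n := le_add_of_nonneg_left zero_le_one
  refine ⟨fun n => (2 ^ (n + 1) * A n)⁻¹, fun n => by have := hA1 n; positivity,
    fun n => ?_, fun n => ?_⟩
  · have := hA1 n
    calc (2 ^ (n + 1 + 1) * A (n + 1))⁻¹ ≤ (2 ^ (n + 1 + 1) * A n)⁻¹ := by gcongr; exact hAmono n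
      _ = (2 ^ (n + 1) * A n)⁻¹ / 2 := by rw [pow_succ]; field_simp
  · have := hA1 n
    have h2 : (2 : ℝ) ≤ 2 ^ (n + 1) := le_self_pow₀ (by norm_num) (by omega)
    rw [mul_inv_le_iff₀ (by positivity)]
    nlinarith [hNA n]

end HalvingSequence

section SumOneSubExp

variable {x : ℕ → ℝ} {t : ℝ}

lemma summable_one_sub_exp_neg_mul (hx0 : ∀ n, 0 ≤ x n) (hx : Summable x) (ht : 0 ≤ t) :
    Summable fun n => 1 - Real.exp (-(t * x n)) :=
  .of_nonneg_of_le (fun n => Real.one_sub_exp_neg_nonneg (mul_nonneg ht (hx0 n)))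
    (fun _ => Real.one_sub_exp_neg_le_self _) (hx.mul_left t)

lemma tendsto_tsum_one_sub_exp_neg_mul_atTop (hx0 : ∀ n, 0 < x n) (hx : Summable x) :
    Tendsto (fun t => ∑' n, (1 - Real.exp (-(t * x n)))) atTop atTop := by
  refine tendsto_atTop.2 fun b => ?_
  obtain ⟨k, hk⟩ := exists_nat_gt b
  have hpartial : Tendsto (fun t => ∑ n ∈ Finset.range k, (1 - Real.exp (-(t * x n))))
      atTop (𝓝 k) := by
    simpa using tendsto_finsetSum (Finset.range k) fun n _ =>
      (tendsto_const_nhds (x := (1 : ℝ))).sub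
        (Real.tendsto_exp_neg_atTop_nhds_zero.comp (tendsto_id.atTop_mul_const (hx0 n)))
  filter_upwards [hpartial.eventually (lt_mem_nhds hk), eventually_ge_atTop 0] with t hbt ht
  exact hbt.le.trans <| (summable_one_sub_exp_neg_mul (fun n => (hx0 n).le) hx ht).sum_le_tsum _
    fun n _ => Real.one_sub_exp_neg_nonneg (mul_nonneg ht (hx0 n).le)

lemma tsum_one_sub_exp_neg_mul_le_of_halving (hx0 : ∀ n, 0 ≤ x n)
    (hx : ∀ n, x (n + 1) ≤ x n / 2) (ht : 0 ≤ t) (m : ℕ) :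
    ∑' n, (1 - Real.exp (-(t * x n))) ≤ m + 2 * t * x m := by
  have hsum := summable_one_sub_exp_neg_mul hx0 (summable_of_halving hx0 hx) ht
  rw [← hsum.sum_add_tsum_nat_add m]
  gcongr
  · simpa using Finset.sum_le_card_nsmul (Finset.range m) _ 1
      fun n _ => (sub_le_self_iff _).2 (Real.exp_pos _).le
  · calc ∑' j, (1 - Real.exp (-(t * x (j + m)))) ≤ ∑' j, t * x (j + m) :=
          ((summable_nat_add_iff m).2 hsum).tsum_le_tsum (fun j => Real.one_sub_exp_neg_le_self _)
            (((summable_nat_add_iff m).2 (summable_of_halving hx0 hx)).mul_left t)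
      _ ≤ t * (2 * x m) := by
          rw [tsum_mul_left]; exact mul_le_mul_of_nonneg_left
            (tsum_nat_add_le_two_mul_of_halving hx0 hx m) ht
      _ = 2 * t * x m := by ring

lemma tsum_one_sub_exp_neg_mul_le_one_or_of_halving (hx0 : ∀ n, 0 ≤ x n)
    (hx : ∀ n, x (n + 1) ≤ x n / 2) (ht : 0 ≤ t) :
    ∑' n, (1 - Real.exp (-(t * x n))) ≤ 1 ∨
      ∃ k : ℕ, 1 < 2 * t * x k ∧ ∑' n, (1 - Real.exp (-(t * x n))) ≤ k + 2 := by
  have hex : ∃ m, 2 * t * x m ≤ 1 :=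
    (((summable_of_halving hx0 hx).tendsto_atTop_zero.const_mul (2 * t)).eventually
      (ge_mem_nhds (by norm_num : (2 * t * 0 : ℝ) < 1))).exists
  classical
  have hle := tsum_one_sub_exp_neg_mul_le_of_halving hx0 hx ht (Nat.find hex)
  have hfind := Nat.find_spec hex
  rcases h : Nat.find hex with _ | k
  · left; rw [h] at hle hfind; push_cast at hle; linarith
  · right
    refine ⟨k, not_le.1 (Nat.find_min hex (h ▸ k.lt_succ_self)), ?_⟩
    rw [h] at hle hfind; push_cast at hle; linarith

end SumOneSubExp

/-- Below any proper function `u ≥ 1` on `ℝ₊` there is a proper Bernstein function. -/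
theorem exists_proper_bernstein_below
    (u : ℝ → ℝ) (huproper : Tendsto u atTop atTop) (hu1 : ∀ t ≥ (0:ℝ), 1 ≤ u t) :
    ∃ F : ℝ → ℝ, IsBernstein F ∧ Tendsto F atTop atTop ∧
      ∀ t ≥ (0:ℝ), F t ≤ u t := by
  choose N hN using fun n : ℕ => eventually_atTop.1 (huproper.eventually_ge_atTop ((n : ℝ) + 2))
  obtain ⟨x, hx0, hx, hxN⟩ := exists_halving_seq N
  have hsum : Summable x := summable_of_halving (fun n => (hx0 n).le) hx
  set μ := Measure.sum fun n => Measure.dirac (x n)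
  have hμ0 : μ (Set.Iic 0) = 0 := by
    simp [μ, Measure.sum_apply _ measurableSet_Iic, fun n => not_le.2 (hx0 n)]
  have hμ1 : Integrable (fun y => y) μ := by
    simpa using integrable_sum_dirac (c := fun _ => 1) (f := fun y : ℝ => y) (x := x)
      (fun _ => ENNReal.one_ne_top) (by simpa [abs_of_pos (hx0 _)] using hsum)
  have hF : ∀ t, ∫ y, (1 - Real.exp (-(t * y))) ∂μ = ∑' n, (1 - Real.exp (-(t * x n))) :=
    fun t => by
      simpa using integral_sum_dirac (c := fun _ => 1)
        (f := fun y => 1 - Real.exp (-(t * y))) (x := x) fun _ => ENNReal.one_ne_top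
  refine ⟨_, isBernstein_integral_one_sub_exp_neg_mul hμ0 hμ1, ?_, fun t ht => ?_⟩
  · simpa only [hF] using tendsto_tsum_one_sub_exp_neg_mul_atTop hx0 hsum
  rw [hF]
  rcases tsum_one_sub_exp_neg_mul_le_one_or_of_halving (fun n => (hx0 n).le) hx ht with
    h | ⟨k, hk, hle⟩
  · exact h.trans (hu1 t ht)
  · exact hle.trans (hN k t (by nlinarith [hxN k, hx0 k]))
end
end

section
/- Let w : ℝ₊ → ℝ₊ be a function with sublinear growth, i.e. w(x)/x → 0 as x → ∞. Then there exists a Bernstein function F with sublinear growth (F(x)/x → 0 as x → ∞) and a constant x₀ such that F(x) ≥ w(x) for all x ≥ x₀. -/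
/-!
Choose integer thresholds `t₀ < t₁ < ⋯` with `w x ≤ 2⁻ⁿ x` for `x ≥ tₙ`, and set
`F x = ∑ₙ cₙ (1 - e^{-x pₙ})` with atoms `pₙ = 1 / tₙ₊₁` and weights `cₙ = 2 · 2⁻ⁿ tₙ₊₁`.
This is the Bernstein function of the Lévy measure `∑ₙ cₙ δ_{pₙ}`, which integrates `x` because
`∑ₙ cₙ pₙ < ∞`. On `[tₙ, tₙ₊₁]` we have `x pₙ ≤ 1`, where `1 - e^{-u} ≥ u / 2`, so the single
term `n` already dominates `2⁻ⁿ x ≥ w x`. Sublinearity is dominated convergence for the series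
`F x / x = ∑ₙ cₙ (1 - e^{-x pₙ}) / x`, whose terms tend to `0` and are bounded by `cₙ pₙ`.
-/

open MeasureTheory Filter Topology
open scoped ENNReal

noncomputable section

open Real Set

lemma one_sub_exp_neg_nonneg_s14 {u : ℝ} (hu : 0 ≤ u) : 0 ≤ 1 - exp (-u) := by
  have : exp (-u) ≤ 1 := exp_le_one_iff.2 (by linarith)
  linarith

lemma norm_one_sub_exp_neg_le {u : ℝ} (hu : 0 ≤ u) : ‖1 - exp (-u)‖ ≤ u := by
  rw [norm_of_nonneg (one_sub_exp_neg_nonneg_s14 hu)]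
  linarith [one_sub_le_exp_neg u]

lemma div_one_add_le_one_sub_exp_neg {u : ℝ} (hu : 0 ≤ u) : u / (1 + u) ≤ 1 - exp (-u) := by
  have hexp : exp (-u) ≤ (1 + u)⁻¹ := by
    rw [exp_neg]
    exact inv_anti₀ (by linarith) (by linarith [add_one_le_exp u])
  have : u / (1 + u) = 1 - (1 + u)⁻¹ := by field_simp; ring
  linarith

lemma mul_le_two_mul_mul_one_sub_exp_neg {ε s x : ℝ} (hε : 0 ≤ ε) (hs : 0 < s) (hx : 0 ≤ x)
    (hxs : x ≤ s) : ε * x ≤ 2 * ε * s * (1 - exp (-(x * s⁻¹))) := by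
  set u := x * s⁻¹
  have hu0 : 0 ≤ u := by positivity
  have hu1 : u ≤ 1 := by rw [mul_inv_le_iff₀ hs]; linarith
  have half_le : u / 2 ≤ 1 - exp (-u) :=
    le_trans (div_le_div_of_nonneg_left hu0 (by linarith) (by linarith))
      (div_one_add_le_one_sub_exp_neg hu0)
  have hx : x = s * u := by simp only [u]; field_simp
  calc ε * x = 2 * ε * s * (u / 2) := by rw [hx]; ring
    _ ≤ 2 * ε * s * (1 - exp (-u)) := by gcongr

def discreteBernstein (c p : ℕ → ℝ) (x : ℝ) : ℝ :=
  ∑' n, c n * (1 - exp (-(x * p n)))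

def discreteLevyMeasure (c p : ℕ → ℝ) : Measure ℝ :=
  Measure.sum fun n => ENNReal.ofReal (c n) • Measure.dirac (p n)

section DiscreteBernstein

variable {c p : ℕ → ℝ}

lemma lintegral_discreteLevyMeasure (g : ℝ → ℝ≥0∞) :
    ∫⁻ x, g x ∂discreteLevyMeasure c p = ∑' n, ENNReal.ofReal (c n) * g (p n) := by
  rw [discreteLevyMeasure, lintegral_sum_measure]
  exact tsum_congr fun n => by rw [lintegral_smul_measure, lintegral_dirac, smul_eq_mul]

lemma discreteLevyMeasure_Iic_zero (hp : ∀ n, 0 < p n) :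
    discreteLevyMeasure c p (Iic 0) = 0 := by
  rw [discreteLevyMeasure, Measure.sum_apply _ measurableSet_Iic]
  refine ENNReal.tsum_eq_zero.2 fun n => ?_
  rw [Measure.smul_apply, Measure.dirac_apply' _ measurableSet_Iic,
    indicator_of_notMem (by simpa using hp n), smul_zero]

variable (hc : ∀ n, 0 ≤ c n)
include hc

lemma integrable_discreteLevyMeasure {g : ℝ → ℝ} (hg : Measurable g)
    (hsum : Summable fun n => c n * ‖g (p n)‖) : Integrable g (discreteLevyMeasure c p) := by
  refine ⟨hg.aestronglyMeasurable, hasFiniteIntegral_iff_enorm.2 ?_⟩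
  rw [lintegral_discreteLevyMeasure]
  calc ∑' n, ENNReal.ofReal (c n) * ‖g (p n)‖ₑ
      = ∑' n, ENNReal.ofReal (c n * ‖g (p n)‖) := by
        refine tsum_congr fun n => ?_
        rw [ENNReal.ofReal_mul (hc n), ofReal_norm]
    _ = ENNReal.ofReal (∑' n, c n * ‖g (p n)‖) :=
        (ENNReal.ofReal_tsum_of_nonneg (fun n => by have := hc n; positivity) hsum).symm
    _ < ⊤ := ENNReal.ofReal_lt_top

lemma integral_discreteLevyMeasure {g : ℝ → ℝ} (hg : Integrable g (discreteLevyMeasure c p)) :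
    ∫ x, g x ∂discreteLevyMeasure c p = ∑' n, c n * g (p n) := by
  rw [discreteLevyMeasure, integral_sum_measure hg]
  refine tsum_congr fun n => ?_
  rw [integral_smul_measure, integral_dirac, smul_eq_mul, ENNReal.toReal_ofReal (hc n)]

variable (hp : ∀ n, 0 < p n)
include hp

lemma norm_mul_one_sub_exp_neg_le {x : ℝ} (hx : 0 ≤ x) (n : ℕ) :
    ‖c n * (1 - exp (-(x * p n)))‖ ≤ x * (c n * p n) := by
  rw [norm_mul, norm_of_nonneg (hc n)]
  calc c n * ‖1 - exp (-(x * p n))‖ ≤ c n * (x * p n) :=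
        mul_le_mul_of_nonneg_left (norm_one_sub_exp_neg_le (by have := hp n; positivity)) (hc n)
    _ = x * (c n * p n) := by ring

variable (hcp : Summable fun n => c n * p n)
include hcp

lemma summable_mul_one_sub_exp_neg {x : ℝ} (hx : 0 ≤ x) :
    Summable fun n => c n * (1 - exp (-(x * p n))) :=
  Summable.of_norm_bounded (hcp.mul_left x) (norm_mul_one_sub_exp_neg_le hc hp hx)

lemma mul_one_sub_exp_neg_le_discreteBernstein {x : ℝ} (hx : 0 ≤ x) (n : ℕ) :
    c n * (1 - exp (-(x * p n))) ≤ discreteBernstein c p x :=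
  (summable_mul_one_sub_exp_neg hc hp hcp hx).le_tsum n fun m _ =>
    mul_nonneg (hc m) (one_sub_exp_neg_nonneg_s14 (by have := hp m; positivity))

lemma continuousOn_discreteBernstein : ContinuousOn (discreteBernstein c p) (Ici 0) := by
  refine continuousOn_of_locally_continuousOn fun x _ => ⟨Iio (x + 1), isOpen_Iio, by simp, ?_⟩
  refine continuousOn_tsum (fun n => by fun_prop) (hcp.mul_left (x + 1)) fun n y hy => ?_
  exact (norm_mul_one_sub_exp_neg_le hc hp hy.1 n).trans
    (mul_le_mul_of_nonneg_right (le_of_lt hy.2) (by have := hc n; have := hp n; positivity))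

lemma integrable_id_discreteLevyMeasure : Integrable (fun x => x) (discreteLevyMeasure c p) :=
  integrable_discreteLevyMeasure hc measurable_id <| hcp.congr fun n => by
    rw [norm_of_nonneg (hp n).le]

lemma discreteBernstein_eq_integral {t : ℝ} (ht : 0 ≤ t) :
    discreteBernstein c p t = ∫ x, (1 - exp (-(t * x))) ∂discreteLevyMeasure c p := by
  have hint : Integrable (fun x => 1 - exp (-(t * x))) (discreteLevyMeasure c p) :=
    integrable_discreteLevyMeasure hc (by fun_prop) <|
      (summable_mul_one_sub_exp_neg hc hp hcp ht).norm.congr fun n => by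
        rw [norm_mul, norm_of_nonneg (hc n)]
  rw [integral_discreteLevyMeasure hc hint, discreteBernstein]

theorem isBernstein_discreteBernstein : IsBernstein (discreteBernstein c p) := by
  refine ⟨continuousOn_discreteBernstein hc hp hcp,
    fun t ht => (mul_one_sub_exp_neg_le_discreteBernstein hc hp hcp ht 0).trans' ?_,
    0, discreteLevyMeasure c p, le_rfl, discreteLevyMeasure_Iic_zero hp, fun ε hε => ?_,
    (integrable_id_discreteLevyMeasure hc hp hcp).integrableOn, fun t ht => ?_⟩
  · exact mul_nonneg (hc 0) (one_sub_exp_neg_nonneg_s14 (by have := hp 0; positivity))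
  · refine (measure_mono fun x (hx : ε ≤ x) => ?_).trans_lt
      ((integrable_id_discreteLevyMeasure hc hp hcp).measure_norm_ge_lt_top hε)
    exact hx.trans (le_abs_self x)
  · rw [zero_mul, zero_add, discreteBernstein_eq_integral hc hp hcp ht.le]

theorem tendsto_discreteBernstein_div_atTop :
    Tendsto (fun x => discreteBernstein c p x / x) atTop (𝓝 0) := by
  simp only [discreteBernstein, ← tsum_div_const]
  rw [← tsum_zero]
  refine tendsto_tsum_of_dominated_convergence hcp (fun n => ?_) ?_
  · have hexp : Tendsto (fun x => exp (-(x * p n))) atTop (𝓝 0) :=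
      tendsto_exp_neg_atTop_nhds_zero.comp (tendsto_id.atTop_mul_const (hp n))
    exact ((hexp.const_sub 1).const_mul (c n)).div_atTop tendsto_id
  · filter_upwards [eventually_gt_atTop 0] with x hx n
    rw [norm_div, norm_of_nonneg hx.le, div_le_iff₀ hx, mul_comm (c n * p n) x]
    exact norm_mul_one_sub_exp_neg_le hc hp hx.le n

end DiscreteBernstein

lemma exists_strictMono_forall_ge_le_mul {f : ℝ → ℝ}
    (hf : Tendsto (fun x => f x / x) atTop (𝓝 0)) {ε : ℕ → ℝ} (hε : ∀ n, 0 < ε n) :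
    ∃ t : ℕ → ℕ, StrictMono t ∧ ∀ n, ∀ x ≥ (t n : ℝ), f x ≤ ε n * x := by
  refine extraction_forall_of_eventually (P := fun n (k : ℕ) => ∀ x ≥ (k : ℝ), f x ≤ ε n * x)
    fun n => tendsto_natCast_atTop_atTop.eventually (p := fun a => ∀ x ≥ a, f x ≤ ε n * x) ?_
  refine eventually_forall_ge_atTop.2 ?_
  filter_upwards [hf.eventually (gt_mem_nhds (hε n)), eventually_gt_atTop 0] with x hfx hx
  exact ((div_lt_iff₀ hx).1 hfx).le

theorem exists_sublinear_bernstein_above_general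
    (w : ℝ → ℝ)
    (hwsub : Tendsto (fun x => w x / x) atTop (𝓝 0)) :
    ∃ F : ℝ → ℝ, IsBernstein F ∧ Tendsto (fun x => F x / x) atTop (𝓝 0) ∧
      ∃ x₀ : ℝ, ∀ x ≥ x₀, w x ≤ F x := by
  obtain ⟨t, ht_mono, hwt⟩ :=
    exists_strictMono_forall_ge_le_mul hwsub (ε := fun n => (1 / 2 : ℝ) ^ n) fun n => by positivity
  set s : ℕ → ℝ := fun n => t (n + 1)
  have hs : ∀ n, 0 < s n := fun n => Nat.cast_pos.2 (Nat.zero_lt_of_lt (ht_mono n.succ_pos))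
  set c : ℕ → ℝ := fun n => 2 * (1 / 2) ^ n * s n
  set p : ℕ → ℝ := fun n => (s n)⁻¹
  have hc : ∀ n, 0 ≤ c n := fun n => by have := hs n; positivity
  have hp : ∀ n, 0 < p n := fun n => inv_pos.2 (hs n)
  have hcp : Summable fun n => c n * p n :=
    (summable_geometric_two.mul_left 2).congr fun n => by
      simp only [c, p, mul_inv_cancel_right₀ (hs n).ne']
  refine ⟨discreteBernstein c p, isBernstein_discreteBernstein hc hp hcp,
    tendsto_discreteBernstein_div_atTop hc hp hcp, t 0 + 1, fun x hx => ?_⟩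
  have ht_real : StrictMono fun n => (t n : ℝ) := Nat.strictMono_cast.comp ht_mono
  obtain ⟨n, htn, hts⟩ := ht_real.exists_between_of_tendsto_atTop
    (tendsto_natCast_atTop_atTop.comp ht_mono.tendsto_atTop) (x := x) (by linarith)
  have hx0 : 0 ≤ x := (Nat.cast_nonneg _).trans htn.le
  calc w x ≤ (1 / 2) ^ n * x := hwt n x htn.le
    _ ≤ c n * (1 - exp (-(x * p n))) :=
        mul_le_two_mul_mul_one_sub_exp_neg (by positivity) (hs n) hx0 hts
    _ ≤ discreteBernstein c p x := mul_one_sub_exp_neg_le_discreteBernstein hc hp hcp hx0 n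

/-- Above any sublinear function `w` on `ℝ₊` (eventually) there is a sublinear Bernstein
function. -/
theorem exists_sublinear_bernstein_above
    (w : ℝ → ℝ) (hw0 : ∀ x ≥ (0:ℝ), 0 ≤ w x)
    (hwsub : Tendsto (fun x => w x / x) atTop (𝓝 0)) :
    ∃ F : ℝ → ℝ, IsBernstein F ∧ Tendsto (fun x => F x / x) atTop (𝓝 0) ∧
      ∃ x₀ : ℝ, ∀ x ≥ x₀, w x ≤ F x :=
  exists_sublinear_bernstein_above_general w hwsub
end
end
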